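/- Let n ≥ 2, q ∈ [0,1], and let P_q be the top-or-bottom-to-random transition matrix on S_n. Define f : S_n → ℝ by f(σ) = Σ_{i ∈ Des(σ)} C(n−2, i−1)·q^{i−1}·(1−q)^{n−1−i}. Then the function σ ↦ f(σ) − 1/2 is a right eigenfunction of P_q with eigenvalue (n−2)/n: for every σ ∈ S_n, Σ_{τ ∈ S_n} P_q(σ,τ)·(f(τ) − 1/2) = ((n−2)/n)·(f(σ) − 1/2). -/

import Mathlib

open Finset

/-- 0-indexed descent set of a deck arrangement: `i ∈ desSet n σ` iff the card at
position `i` is greater than the card at position `i+1` (positions `0, …, n-2`). -/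
def desSet (n : ℕ) (σ : Equiv.Perm (Fin n)) : Finset ℕ :=
  (Finset.range (n - 1)).filter
    (fun i => ∃ h : i + 1 < n, σ ⟨i + 1, h⟩ < σ ⟨i, Nat.lt_of_succ_lt h⟩)

/-- `des σ` is the number of descents of `σ`. -/
def des (n : ℕ) (σ : Equiv.Perm (Fin n)) : ℕ := (desSet n σ).card

/-- the cycle `e_i` (0-indexed): sends `j ↦ j-1` for `j > i`, `i ↦ n-1`, fixes `j < i`.
(`Fin.cycleRange i` is the cycle `c_i` (0-indexed): sends `j ↦ j+1` for `j < i`,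
`i ↦ 0`, fixes `j > i`.) -/
def botCycle (n : ℕ) (i : Fin n) : Equiv.Perm (Fin n) :=
  Fin.revPerm * Fin.cycleRange i.rev * Fin.revPerm

/-- top-or-bottom-to-random transition matrix with parameter `q`:
with probability `q` remove the top card and reinsert it at a uniform position,
otherwise do the same with the bottom card. -/
noncomputable def Pq (n : ℕ) (q : ℝ) : Matrix (Equiv.Perm (Fin n)) (Equiv.Perm (Fin n)) ℝ :=
  fun σ τ =>
    q / n * ((Finset.univ.filter (fun i : Fin n => τ = σ * Fin.cycleRange i)).card : ℝ) +
    (1 - q) / n * ((Finset.univ.filter (fun i : Fin n => τ = σ * botCycle n i)).card : ℝ)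

/-- weighted descent statistic `f(σ) = Σ_{j ∈ Des(σ)} C(n-2,j) q^j (1-q)^{n-2-j}`
(0-indexed version of `Σ_{i ∈ Des(σ)} C(n-2,i-1) q^{i-1} (1-q)^{n-1-i}`). -/
noncomputable def fdes (n : ℕ) (q : ℝ) (σ : Equiv.Perm (Fin n)) : ℝ :=
  ∑ j ∈ desSet n σ, ((n - 2).choose j : ℝ) * q ^ j * (1 - q) ^ (n - 2 - j)

/-!
After the top card is reinserted at position `i`, the cards at positions `j, j + 1` come from
positions `j, j + 1` if `i < j` and from `j + 1, j + 2` if `i > j + 1`, while the two insertions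
`i = j` and `i = j + 1` compare the same two cards in opposite orders and so contribute exactly
one descent together; the bottom move is the mirror image. Averaging `f` over one step thus
attaches the Bernstein weights `b j = C(m, j) q^j (1 - q)^(m - j)`, `m = n - 2`, to shifted
descent indicators, and the relation `q (m - j) b j = (1 - q) (j + 1) b (j + 1)` moves every
shift back: `n · E[f(τ)] = m f(σ) + 1`. Subtracting `1/2` gives the eigenvalue `m / n`.
-/

open Polynomial Equiv

namespace bernsteinPolynomial

variable {R : Type*} [CommRing R]

theorem X_mul_natCast_sub_mul (m ν : ℕ) :
    X * ((m - ν : ℕ) : R[X]) * bernsteinPolynomial R m ν =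
      (1 - X) * ((ν + 1 : ℕ) : R[X]) * bernsteinPolynomial R m (ν + 1) := by
  rcases le_or_gt m ν with h | h
  · rw [Nat.sub_eq_zero_of_le h, eq_zero_of_lt R (Nat.lt_succ_of_le h)]
    simp
  · obtain ⟨k, rfl⟩ : ∃ k, m = ν + 1 + k := ⟨m - ν - 1, by omega⟩
    have hchoose := congrArg (Nat.cast (R := R[X])) (Nat.choose_succ_right_eq (ν + 1 + k) ν)
    simp only [bernsteinPolynomial, show ν + 1 + k - ν = k + 1 by omega,
      show ν + 1 + k - (ν + 1) = k by omega] at hchoose ⊢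
    push_cast at hchoose ⊢
    linear_combination (-X ^ (ν + 1) * (1 - X) ^ (k + 1)) * hchoose

/-- `D` is arbitrary: `D (j - 1)` at `j = 0` (truncated subtraction) and `D (m + 1)` only occur
with coefficient `0`. -/
theorem sum_eval_mul_shift (m : ℕ) (q : R) (D : ℕ → R) :
    ∑ j ∈ range (m + 1), (bernsteinPolynomial R m j).eval q *
        (q * (((m - j : ℕ) : R) * D (j + 1) + j * D j) +
          (1 - q) * (((m - j : ℕ) : R) * D j + j * D (j - 1))) =
      m * ∑ j ∈ range (m + 1), (bernsteinPolynomial R m j).eval q * D j := by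
  set b : ℕ → R := fun j => (bernsteinPolynomial R m j).eval q
  have ratio (j : ℕ) :
      q * ((m - j : ℕ) : R) * b j = (1 - q) * ((j + 1 : ℕ) : R) * b (j + 1) := by
    simpa using congrArg (eval q) (X_mul_natCast_sub_mul (R := R) m j)
  have shift_up : ∑ j ∈ range (m + 1), q * ((m - j : ℕ) : R) * b j * D (j + 1) =
      ∑ j ∈ range (m + 1), (1 - q) * j * b j * D j := by
    rw [sum_range_succ, sum_range_succ']
    simp [ratio]
  have shift_down : ∑ j ∈ range (m + 1), (1 - q) * j * b j * D (j - 1) =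
      ∑ j ∈ range (m + 1), q * ((m - j : ℕ) : R) * b j * D j := by
    rw [sum_range_succ', sum_range_succ]
    simp [ratio]
  calc _ = ∑ j ∈ range (m + 1), q * ((m - j : ℕ) : R) * b j * D (j + 1) +
          ∑ j ∈ range (m + 1), (1 - q) * j * b j * D (j - 1) +
          ∑ j ∈ range (m + 1), (q * j + (1 - q) * ((m - j : ℕ) : R)) * b j * D j := by
        rw [← sum_add_distrib, ← sum_add_distrib]
        exact sum_congr rfl fun j _ => by ring
    _ = ∑ j ∈ range (m + 1), (j + ((m - j : ℕ) : R)) * (b j * D j) := by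
        rw [shift_up, shift_down, ← sum_add_distrib, ← sum_add_distrib]
        exact sum_congr rfl fun j _ => by ring
    _ = _ := by
        rw [mul_sum]
        refine sum_congr rfl fun j hj => ?_
        rw [Nat.cast_sub (Nat.lt_succ_iff.1 (mem_range.1 hj))]
        ring

end bernsteinPolynomial

theorem Finset.sum_natCast_card_filter_eq_mul {ι α R : Type*} [Fintype ι] [Fintype α]
    [DecidableEq α] [NonAssocSemiring R] (c : ι → α) (g : α → R) :
    ∑ a, (#{i | a = c i} : R) * g a = ∑ i, g (c i) := by
  rw [← sum_fiberwise' univ c g]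
  refine sum_congr rfl fun a _ => ?_
  simp_rw [sum_const, nsmul_eq_mul, eq_comm]

theorem Fin.sum_univ_eq_of_eq_below_of_eq_above {M : Type*} [AddCommMonoid M] {m j : ℕ}
    (hj : j ≤ m) (F : Fin (m + 2) → M) {a b : M} (ha : ∀ i : Fin (m + 2), (i : ℕ) < j → F i = a)
    (hb : ∀ i : Fin (m + 2), j + 1 < (i : ℕ) → F i = b) :
    ∑ i, F i = j • a + (F ⟨j, by omega⟩ + F ⟨j + 1, by omega⟩) + (m - j) • b := by
  set G : ℕ → M := fun k => if h : k < m + 2 then F ⟨k, h⟩ else 0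
  have hG : ∑ i, F i = ∑ k ∈ range (m + 2), G k := by
    rw [← Fin.sum_univ_eq_sum_range]
    simp [G]
  obtain ⟨k, rfl⟩ : ∃ k, m = j + k := ⟨m - j, by omega⟩
  rw [hG, show j + k - j = k by omega]
  conv_lhs => rw [show j + k + 2 = j + (2 + k) by ring, sum_range_add, sum_range_add]
  rw [← add_assoc]
  congr 2
  · rw [sum_eq_card_nsmul (b := a), card_range]
    intro i hi
    rw [mem_range] at hi
    simpa [G, show i < j + k + 2 by omega] using ha ⟨i, by omega⟩ hi
  · simp [G, sum_range_succ, show j < j + k + 2 by omega]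
  · rw [sum_eq_card_nsmul (b := b), card_range]
    intro i hi
    rw [mem_range] at hi
    simpa [G, show j + (2 + i) < j + k + 2 by omega] using hb ⟨_, _⟩ (by simp; omega)

theorem Fin.coe_cycleRange_apply {n : ℕ} (i k : Fin n) :
    (Fin.cycleRange i k : ℕ) = if k < i then (k : ℕ) + 1 else if k = i then 0 else (k : ℕ) := by
  rcases lt_trichotomy k i with h | rfl | h
  · simp [h, Fin.coe_cycleRange_of_lt h]
  · simp [Fin.coe_cycleRange_of_le le_rfl]
  · simp [h.not_gt, h.ne', Fin.cycleRange_of_gt h]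

theorem coe_botCycle_apply {n : ℕ} (i k : Fin n) :
    (botCycle n i k : ℕ) = if k < i then (k : ℕ) else if k = i then n - 1 else (k : ℕ) - 1 := by
  simp only [botCycle, Perm.mul_apply, Fin.revPerm_apply, Fin.val_rev, Fin.coe_cycleRange_apply,
    Fin.rev_lt_rev, Fin.rev_inj]
  split_ifs <;> simp only [Fin.lt_def, Fin.ext_iff] at * <;> omega

theorem desSet_subset_range {n : ℕ} (σ : Perm (Fin n)) : desSet n σ ⊆ range (n - 1) :=
  filter_subset _ _

theorem mem_desSet_iff {n j : ℕ} (σ : Perm (Fin n)) (hj : j + 1 < n) :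
    j ∈ desSet n σ ↔ σ ⟨j + 1, hj⟩ < σ ⟨j, by omega⟩ := by
  simp only [desSet, mem_filter, mem_range]
  exact ⟨fun ⟨_, _, h⟩ => h, fun h => ⟨by omega, hj, h⟩⟩

noncomputable def desInd (n : ℕ) (σ : Perm (Fin n)) (j : ℕ) : ℝ :=
  if j ∈ desSet n σ then 1 else 0

theorem desInd_mul_of_apply {n j a : ℕ} (σ : Perm (Fin n)) {π : Perm (Fin n)} (hj : j + 1 < n)
    (ha : a + 1 < n) (h0 : (π ⟨j, by omega⟩ : ℕ) = a) (h1 : (π ⟨j + 1, hj⟩ : ℕ) = a + 1) :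
    desInd n (σ * π) j = desInd n σ a := by
  have e0 : π ⟨j, by omega⟩ = ⟨a, by omega⟩ := Fin.ext h0
  have e1 : π ⟨j + 1, hj⟩ = ⟨a + 1, ha⟩ := Fin.ext h1
  simp only [desInd, mem_desSet_iff _ hj, mem_desSet_iff _ ha, Perm.mul_apply, e0, e1]

theorem desInd_mul_add_desInd_mul_of_swap {n j : ℕ} (σ : Perm (Fin n)) {π π' : Perm (Fin n)}
    (hj : j + 1 < n) (h0 : (π' ⟨j, by omega⟩ : ℕ) = π ⟨j + 1, hj⟩)
    (h1 : (π' ⟨j + 1, hj⟩ : ℕ) = π ⟨j, by omega⟩) :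
    desInd n (σ * π) j + desInd n (σ * π') j = 1 := by
  have hne : σ (π ⟨j + 1, hj⟩) ≠ σ (π ⟨j, by omega⟩) :=
    σ.injective.ne (π.injective.ne (by simp))
  simp only [desInd, mem_desSet_iff _ hj, Perm.mul_apply, Fin.ext h0, Fin.ext h1]
  rcases hne.lt_or_gt with h | h <;> simp [h, h.not_gt]

theorem sum_desInd_mul_cycleRange {m j : ℕ} (σ : Perm (Fin (m + 2))) (hj : j ≤ m) :
    ∑ i, desInd (m + 2) (σ * Fin.cycleRange i) j =
      j * desInd (m + 2) σ j + 1 + (m - j : ℕ) * desInd (m + 2) σ (j + 1) := by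
  rw [Fin.sum_univ_eq_of_eq_below_of_eq_above hj _ (a := desInd (m + 2) σ j)
      (b := desInd (m + 2) σ (j + 1)), desInd_mul_add_desInd_mul_of_swap σ (by omega),
    nsmul_eq_mul, nsmul_eq_mul]
  all_goals (try intro i hi; apply desInd_mul_of_apply) <;>
    simp [Fin.coe_cycleRange_apply, Fin.lt_def] <;> grind

theorem sum_desInd_mul_botCycle {m j : ℕ} (σ : Perm (Fin (m + 2))) (hj : j ≤ m) :
    ∑ i, desInd (m + 2) (σ * botCycle (m + 2) i) j =
      j * desInd (m + 2) σ (j - 1) + 1 + (m - j : ℕ) * desInd (m + 2) σ j := by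
  rw [Fin.sum_univ_eq_of_eq_below_of_eq_above hj _ (a := desInd (m + 2) σ (j - 1))
      (b := desInd (m + 2) σ j), desInd_mul_add_desInd_mul_of_swap σ (by omega),
    nsmul_eq_mul, nsmul_eq_mul]
  all_goals (try intro i hi; apply desInd_mul_of_apply) <;>
    simp [coe_botCycle_apply, Fin.lt_def] <;> grind

theorem fdes_eq_sum_desInd (n : ℕ) (q : ℝ) (σ : Perm (Fin n)) :
    fdes n q σ = ∑ j ∈ range (n - 1), (bernsteinPolynomial ℝ (n - 2) j).eval q * desInd n σ j := by
  simp only [desInd, mul_ite, mul_one, mul_zero, ← sum_filter]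
  rw [filter_mem_eq_inter, inter_eq_right.2 (desSet_subset_range σ), fdes]
  simp [bernsteinPolynomial]

theorem sum_fdes_mul (m : ℕ) (q : ℝ) (σ : Perm (Fin (m + 2)))
    (c : Fin (m + 2) → Perm (Fin (m + 2))) :
    ∑ i, fdes (m + 2) q (σ * c i) =
      ∑ j ∈ range (m + 1),
        (bernsteinPolynomial ℝ m j).eval q * ∑ i, desInd (m + 2) (σ * c i) j := by
  simp_rw [fdes_eq_sum_desInd, mul_sum]
  exact sum_comm

theorem q_mul_sum_fdes_top_add_bottom (m : ℕ) (q : ℝ) (σ : Perm (Fin (m + 2))) :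
    q * ∑ i, fdes (m + 2) q (σ * Fin.cycleRange i) +
        (1 - q) * ∑ i, fdes (m + 2) q (σ * botCycle (m + 2) i) =
      m * fdes (m + 2) q σ + 1 := by
  rw [sum_fdes_mul, sum_fdes_mul, fdes_eq_sum_desInd, mul_sum, mul_sum, ← sum_add_distrib]
  calc _ = ∑ j ∈ range (m + 1), ((bernsteinPolynomial ℝ m j).eval q *
          (q * (((m - j : ℕ) : ℝ) * desInd (m + 2) σ (j + 1) + j * desInd (m + 2) σ j) +
            (1 - q) * (((m - j : ℕ) : ℝ) * desInd (m + 2) σ j + j * desInd (m + 2) σ (j - 1))) +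
          (bernsteinPolynomial ℝ m j).eval q) := by
        refine sum_congr rfl fun j hj => ?_
        have hj : j ≤ m := Nat.lt_succ_iff.1 (mem_range.1 hj)
        rw [sum_desInd_mul_cycleRange σ hj, sum_desInd_mul_botCycle σ hj]
        ring
    _ = _ := by
        rw [sum_add_distrib, bernsteinPolynomial.sum_eval_mul_shift, ← eval_finsetSum,
          bernsteinPolynomial.sum, eval_one]
        rfl

theorem sum_Pq_mul (n : ℕ) (q : ℝ) (σ : Perm (Fin n)) (g : Perm (Fin n) → ℝ) :
    ∑ τ, Pq n q σ τ * g τ =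
      q / n * ∑ i, g (σ * Fin.cycleRange i) + (1 - q) / n * ∑ i, g (σ * botCycle n i) := by
  simp only [Pq, add_mul, sum_add_distrib, mul_assoc, ← mul_sum,
    sum_natCast_card_filter_eq_mul (fun i => σ * Fin.cycleRange i),
    sum_natCast_card_filter_eq_mul (fun i => σ * botCycle n i)]

theorem stmt13_general (n : ℕ) (hn : 2 ≤ n) (q : ℝ)
    (σ : Equiv.Perm (Fin n)) :
    ∑ τ : Equiv.Perm (Fin n), Pq n q σ τ * (fdes n q τ - 1 / 2) =
      (((n : ℝ) - 2) / n) * (fdes n q σ - 1 / 2) := by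
  obtain ⟨m, rfl⟩ : ∃ m, n = m + 2 := ⟨n - 2, by omega⟩
  have key := q_mul_sum_fdes_top_add_bottom m q σ
  rw [sum_Pq_mul, sum_sub_distrib, sum_sub_distrib]
  simp only [sum_const, card_univ, Fintype.card_fin, nsmul_eq_mul]
  push_cast
  field_simp
  linear_combination 2 * key

/-- `σ ↦ f(σ) - 1/2` is a right eigenfunction of the top-or-bottom-to-random
transition matrix with eigenvalue `(n-2)/n`. -/
theorem stmt13 (n : ℕ) (hn : 2 ≤ n) (q : ℝ) (hq : q ∈ Set.Icc (0 : ℝ) 1)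
    (σ : Equiv.Perm (Fin n)) :
    ∑ τ : Equiv.Perm (Fin n), Pq n q σ τ * (fdes n q τ - 1 / 2) =
      (((n : ℝ) - 2) / n) * (fdes n q σ - 1 / 2) :=
  stmt13_general n hn q σ
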